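/- arXiv:2311.15552 — 4 statements merged into one kernel-verified Lean document; each statement's English description precedes it below -/
import Mathlib

section
/- Let (x_{k,p})_{k≥1} and (y_{k,p})_{k≥1} be sequences of vectors in ℝ₊ⁿ depending on a parameter p, satisfying x_{k,p} ≤ A x_{k−1,p} + y_{k,p} (componentwise) for all k and p, where A is an n×n matrix with nonnegative entries whose powers Aᵏ converge to the zero matrix. If (x_{k,p}) is bounded uniformly in p and y_{k,p} → 0 as k → ∞ uniformly in p, then x_{k,p} → 0 as k → ∞ uniformly in p. -/
open Filter

/-- vector recursion lemma with a matrix convergent to zero. -/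
theorem stmt_1 {n : ℕ} {P : Type*} (A : Matrix (Fin n) (Fin n) ℝ)
    (hA_nonneg : ∀ i j, 0 ≤ A i j)
    (hA : Tendsto (fun k : ℕ => A ^ k) atTop (nhds 0))
    (x y : ℕ → P → Fin n → ℝ)
    (hx_nonneg : ∀ k p i, 0 ≤ x k p i)
    (hy_nonneg : ∀ k p i, 0 ≤ y k p i)
    (hrec : ∀ k ≥ 1, ∀ p i, x k p i ≤ A.mulVec (x (k - 1) p) i + y k p i)
    (hbdd : ∃ B : ℝ, ∀ k p i, x k p i ≤ B)
    (hy : ∀ ε > (0:ℝ), ∃ K : ℕ, ∀ k ≥ K, ∀ p i, y k p i < ε) :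
    ∀ ε > (0:ℝ), ∃ K : ℕ, ∀ k ≥ K, ∀ p i, x k p i < ε := by
  intro ε hε
  rcases Nat.eq_zero_or_pos n with hn | hn
  · subst hn
    exact ⟨0, fun k _ p i => i.elim0⟩
  obtain ⟨B, hB⟩ := hbdd
  set B' : ℝ := max B 1 with hB'def
  have hB'pos : (0:ℝ) < B' := lt_of_lt_of_le one_pos (le_max_right _ _)
  have hxB' : ∀ k p i, x k p i ≤ B' := fun k p i => (hB k p i).trans (le_max_left _ _)
  -- nonnegativity of powers
  have hApow : ∀ m i j, (0:ℝ) ≤ (A ^ m) i j := by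
    intro m
    induction m with
    | zero =>
      intro i j
      by_cases h : i = j <;> simp [Matrix.one_apply, h]
    | succ m ih =>
      intro i j
      rw [pow_succ, Matrix.mul_apply]
      exact Finset.sum_nonneg fun l _ => mul_nonneg (ih i l) (hA_nonneg l j)
  -- sum of entries tends to 0
  have hf : Tendsto (fun k : ℕ => ∑ i, ∑ j, (A ^ k) i j) atTop (nhds 0) := by
    have h0 : (0:ℝ) = ∑ i : Fin n, ∑ j : Fin n, (0:ℝ) := by simp
    rw [h0]
    refine tendsto_finset_sum _ fun i _ => tendsto_finset_sum _ fun j _ => ?_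
    have h1 := tendsto_pi_nhds.mp hA i
    exact tendsto_pi_nhds.mp h1 j
  have hentry : ∀ k i j, (A ^ k) i j ≤ ∑ i', ∑ j', (A ^ k) i' j' := by
    intro k i j
    calc (A ^ k) i j ≤ ∑ j', (A ^ k) i j' :=
          Finset.single_le_sum (fun l _ => hApow k i l) (Finset.mem_univ j)
      _ ≤ ∑ i', ∑ j', (A ^ k) i' j' :=
          Finset.single_le_sum
            (fun l _ => Finset.sum_nonneg fun j' _ => hApow k l j') (Finset.mem_univ i)
  -- uniform bound M on entries of all powers
  obtain ⟨M₀, hM₀⟩ := hf.bddAbove_range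
  set M : ℝ := max M₀ 0 with hMdef
  have hMnonneg : (0:ℝ) ≤ M := le_max_right _ _
  have hM : ∀ k i j, (A ^ k) i j ≤ M := fun k i j =>
    (hentry k i j).trans ((hM₀ ⟨k, rfl⟩).trans (le_max_left _ _))
  -- key iterated inequality
  have key : ∀ m k, m ≤ k → ∀ p i,
      x k p i ≤ (A ^ m).mulVec (x (k - m) p) i
        + ∑ j ∈ Finset.range m, (A ^ j).mulVec (y (k - j) p) i := by
    intro m
    induction m with
    | zero =>
      intro k _ p i
      simp [Matrix.one_mulVec]
    | succ m ih =>
      intro k hk p i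
      have hk' : m ≤ k := by omega
      have h1 := ih k hk' p i
      have hrec' := hrec (k - m) (by omega) p
      have hmono : (A ^ m).mulVec (x (k - m) p) i
          ≤ (A ^ m).mulVec (fun l => A.mulVec (x (k - m - 1) p) l + y (k - m) p l) i := by
        simp only [Matrix.mulVec, dotProduct]
        exact Finset.sum_le_sum fun l _ =>
          mul_le_mul_of_nonneg_left (hrec' l) (hApow m i l)
      have hsplit : (A ^ m).mulVec (fun l => A.mulVec (x (k - m - 1) p) l + y (k - m) p l) i
          = (A ^ (m + 1)).mulVec (x (k - m - 1) p) i + (A ^ m).mulVec (y (k - m) p) i := by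
        have : (fun l => A.mulVec (x (k - m - 1) p) l + y (k - m) p l)
            = A.mulVec (x (k - m - 1) p) + y (k - m) p := rfl
        rw [this, Matrix.mulVec_add, Matrix.mulVec_mulVec, ← pow_succ]
        rfl
      have hidx : k - (m + 1) = k - m - 1 := by omega
      rw [Finset.sum_range_succ, hidx]
      calc x k p i ≤ (A ^ m).mulVec (x (k - m) p) i
            + ∑ j ∈ Finset.range m, (A ^ j).mulVec (y (k - j) p) i := h1
        _ ≤ (A ^ (m + 1)).mulVec (x (k - m - 1) p) i + (A ^ m).mulVec (y (k - m) p) i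
            + ∑ j ∈ Finset.range m, (A ^ j).mulVec (y (k - j) p) i := by
              rw [← hsplit]
              exact add_le_add_left hmono _
        _ = (A ^ (m + 1)).mulVec (x (k - m - 1) p) i
            + (∑ j ∈ Finset.range m, (A ^ j).mulVec (y (k - j) p) i
              + (A ^ m).mulVec (y (k - m) p) i) := by ring
  -- choose m with entries of A^m small
  set c : ℝ := ε / (2 * n * B') with hcdef
  have hc : 0 < c := by
    have hn' : (0:ℝ) < n := by exact_mod_cast hn
    positivity
  obtain ⟨m, hm⟩ := (hf.eventually_lt_const hc).exists
  have hAm : ∀ i j, (A ^ m) i j < c := fun i j => lt_of_le_of_lt (hentry m i j) hm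
  -- choose δ and K₀
  set D : ℝ := (m : ℝ) * n * M + 1 with hDdef
  have hD : (0:ℝ) < D := by positivity
  set δ : ℝ := ε / (2 * D) with hδdef
  have hδ : 0 < δ := by positivity
  obtain ⟨K₀, hK₀⟩ := hy δ hδ
  refine ⟨K₀ + m, fun k hk p i => ?_⟩
  have hkm : m ≤ k := by omega
  have h1 := key m k hkm p i
  -- first term ≤ ε/2
  have hfirst : (A ^ m).mulVec (x (k - m) p) i ≤ ε / 2 := by
    have : (A ^ m).mulVec (x (k - m) p) i ≤ ∑ _l : Fin n, c * B' := by
      simp only [Matrix.mulVec, dotProduct]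
      exact Finset.sum_le_sum fun l _ =>
        mul_le_mul (le_of_lt (hAm i l)) (hxB' _ p l) (hx_nonneg _ p l) (le_of_lt hc)
    refine this.trans ?_
    rw [Finset.sum_const, Finset.card_univ, Fintype.card_fin, nsmul_eq_mul]
    have hn' : (n:ℝ) ≠ 0 := by exact_mod_cast hn.ne'
    have hB'ne : B' ≠ 0 := hB'pos.ne'
    rw [hcdef]
    apply le_of_eq
    field_simp
  -- second term < ε/2
  have hsecond : ∑ j ∈ Finset.range m, (A ^ j).mulVec (y (k - j) p) i < ε / 2 := by
    have hterm : ∀ j ∈ Finset.range m, (A ^ j).mulVec (y (k - j) p) i ≤ (n : ℝ) * (M * δ) := by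
      intro j hj
      have hj' : j < m := Finset.mem_range.mp hj
      have hkj : K₀ ≤ k - j := by omega
      have hyb : ∀ l, y (k - j) p l ≤ δ := fun l => le_of_lt (hK₀ (k - j) hkj p l)
      have : (A ^ j).mulVec (y (k - j) p) i ≤ ∑ _l : Fin n, M * δ := by
        simp only [Matrix.mulVec, dotProduct]
        exact Finset.sum_le_sum fun l _ =>
          mul_le_mul (hM j i l) (hyb l) (hy_nonneg _ p l) hMnonneg
      simpa [Finset.sum_const, Finset.card_univ, nsmul_eq_mul] using this
    calc ∑ j ∈ Finset.range m, (A ^ j).mulVec (y (k - j) p) i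
        ≤ ∑ _j ∈ Finset.range m, (n : ℝ) * (M * δ) := Finset.sum_le_sum hterm
      _ = (m : ℝ) * ((n : ℝ) * (M * δ)) := by
          rw [Finset.sum_const, Finset.card_range, nsmul_eq_mul]
      _ = ((m : ℝ) * n * M) * δ := by ring
      _ < D * δ := by
          apply mul_lt_mul_of_pos_right _ hδ
          rw [hDdef]; linarith
      _ = ε / 2 := by
          rw [hδdef]
          field_simp
  calc x k p i ≤ (A ^ m).mulVec (x (k - m) p) i
        + ∑ j ∈ Finset.range m, (A ^ j).mulVec (y (k - j) p) i := h1
    _ < ε / 2 + ε / 2 := add_lt_add_of_le_of_lt hfirst hsecond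
    _ = ε := by ring
end

section
/- Let H be a Hilbert space, N : H × H → ℝ with growth condition −α̲‖v‖² − C ≤ N(u,v) ≤ ᾱ‖u‖² + C for 0 ≤ ᾱ, α̲ < ½, ᾱ + α̲ < ½, C > 0. Suppose sequences (u_k), (v_k) in H satisfy ½‖u_k‖² − N(u_k, v_{k−1}) ≤ E₁(0, v_{k−1}) + 1 and −½‖v_k‖² − N(u_k, v_k) ≥ E₂(u_k, 0) − 1, where E₁(u,v) = ½‖u‖² − N(u,v), E₂(u,v) = −½‖v‖² − N(u,v). Then there exist constants C₁, C₂ such that ‖u_k‖² ≤ (α̲/(½−ᾱ))‖v_{k−1}‖² + C₁ and ‖v_k‖² ≤ (ᾱ/(½−α̲))‖u_k‖² + C₂ for all k, and consequently the sequences (u_k) and (v_k) are bounded. -/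
/-!
Each near-optimality inequality, combined with the two-sided growth bound on `N`, controls one
squared norm linearly by the other: `‖u_k‖² ≤ a ‖v_{k-1}‖² + C₁` and `‖v_k‖² ≤ b ‖u_k‖² + C₂` with
`a = α₂ / (1/2 - α₁)`, `b = α₁ / (1/2 - α₂)`. Chaining them gives `‖v_k‖² ≤ ab ‖v_{k-1}‖² + D`,
and `ab < 1` is exactly `α₁ + α₂ < 1/2`, so `‖v_k‖²` stays below the fixed point of this affine
contraction, and `‖u_k‖²` with it.
-/

lemma le_max_div_of_le_mul_add {y : ℕ → ℝ} {ρ D : ℝ} (hρ₀ : 0 ≤ ρ) (hρ₁ : ρ < 1)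
    (h : ∀ n, y (n + 1) ≤ ρ * y n + D) (n : ℕ) : y n ≤ max (y 0) (D / (1 - ρ)) := by
  set M := max (y 0) (D / (1 - ρ))
  have hfix : ρ * M + D ≤ M := by
    have : D ≤ M * (1 - ρ) := (div_le_iff₀ (by linarith)).mp (le_max_right _ _)
    linarith
  induction n with
  | zero => exact le_max_left _ _
  | succ n ih => linarith [h n, mul_le_mul_of_nonneg_left ih hρ₀]

lemma exists_bound_of_alternating_le {x y : ℕ → ℝ} {a b c₁ c₂ : ℝ} (ha : 0 ≤ a) (hb : 0 ≤ b)
    (hab : a * b < 1) (hx : ∀ k ≥ 1, x k ≤ a * y (k - 1) + c₁)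
    (hy : ∀ k ≥ 1, y k ≤ b * x k + c₂) : ∃ B, ∀ k ≥ 1, x k ≤ B ∧ y k ≤ B := by
  have hstep (n : ℕ) : y (n + 1) ≤ a * b * y n + (b * c₁ + c₂) := by
    have hxn := mul_le_mul_of_nonneg_left (hx (n + 1) le_add_self) hb
    rw [Nat.add_sub_cancel] at hxn
    linarith [hy (n + 1) le_add_self]
  set M := max (y 0) ((b * c₁ + c₂) / (1 - a * b))
  have hyM (n : ℕ) : y n ≤ M :=
    le_max_div_of_le_mul_add (mul_nonneg ha hb) hab hstep n
  refine ⟨max (a * M + c₁) M, fun k hk => ⟨?_, (hyM k).trans (le_max_right _ _)⟩⟩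
  calc x k ≤ a * y (k - 1) + c₁ := hx k hk
    _ ≤ a * M + c₁ := by gcongr; exact hyM _
    _ ≤ _ := le_max_left _ _

section GrowthBound

variable {H : Type*} [SeminormedAddGroup H] {N : H → H → ℝ} {α₁ α₂ C : ℝ}

lemma norm_sq_le_of_almost_minimizer (hα₁ : 0 < 1/2 - α₁)
    (hgrowth : ∀ u v : H, -α₂ * ‖v‖^2 - C ≤ N u v ∧ N u v ≤ α₁ * ‖u‖^2 + C) {u w : H}
    (h : (1/2) * ‖u‖^2 - N u w ≤ ((1/2) * ‖(0:H)‖^2 - N 0 w) + 1) :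
    ‖u‖^2 ≤ α₂ / (1/2 - α₁) * ‖w‖^2 + (2 * C + 1) / (1/2 - α₁) := by
  rw [div_mul_eq_mul_div, ← add_div, le_div_iff₀ hα₁]
  rw [norm_zero] at h
  linarith [(hgrowth u w).2, (hgrowth 0 w).1]

lemma norm_sq_le_of_almost_maximizer (hα₂ : 0 < 1/2 - α₂)
    (hgrowth : ∀ u v : H, -α₂ * ‖v‖^2 - C ≤ N u v ∧ N u v ≤ α₁ * ‖u‖^2 + C) {u w : H}
    (h : (-(1/2) * ‖(0:H)‖^2 - N u 0) - 1 ≤ -(1/2) * ‖w‖^2 - N u w) :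
    ‖w‖^2 ≤ α₁ / (1/2 - α₂) * ‖u‖^2 + (2 * C + 1) / (1/2 - α₂) := by
  rw [div_mul_eq_mul_div, ← add_div, le_div_iff₀ hα₂]
  rw [norm_zero] at h
  linarith [(hgrowth u w).1, (hgrowth u 0).2]

end GrowthBound

lemma growth_ratio_mul_lt_one {α₁ α₂ : ℝ} (hα₁ : 0 < 1/2 - α₁) (hα₂ : 0 < 1/2 - α₂)
    (hsum : α₁ + α₂ < 1/2) : α₂ / (1/2 - α₁) * (α₁ / (1/2 - α₂)) < 1 := by
  rw [div_mul_div_comm, div_lt_one (mul_pos hα₁ hα₂)]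
  nlinarith

theorem stmt_7_general {H : Type*} [NormedAddCommGroup H]
    (N : H → H → ℝ) (α₁ α₂ C : ℝ)
    (hα₁ : 0 ≤ α₁) (hα₂ : 0 ≤ α₂)
    (hsum : α₁ + α₂ < 1/2)
    (hgrowth : ∀ u v : H, -α₂ * ‖v‖^2 - C ≤ N u v ∧ N u v ≤ α₁ * ‖u‖^2 + C)
    (u v : ℕ → H)
    (hu : ∀ k ≥ 1, (1/2) * ‖u k‖^2 - N (u k) (v (k - 1)) ≤
      ((1/2) * ‖(0:H)‖^2 - N 0 (v (k - 1))) + 1)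
    (hv : ∀ k ≥ 1, (-(1/2) * ‖(0:H)‖^2 - N (u k) 0) - 1 ≤
      -(1/2) * ‖v k‖^2 - N (u k) (v k)) :
    (∃ C₁ C₂ : ℝ,
      (∀ k ≥ 1, ‖u k‖^2 ≤ (α₂ / (1/2 - α₁)) * ‖v (k - 1)‖^2 + C₁) ∧
      (∀ k ≥ 1, ‖v k‖^2 ≤ (α₁ / (1/2 - α₂)) * ‖u k‖^2 + C₂)) ∧
    (∃ B : ℝ, ∀ k ≥ 1, ‖u k‖ ≤ B ∧ ‖v k‖ ≤ B) := by
  have hp₁ : 0 < 1/2 - α₁ := by linarith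
  have hp₂ : 0 < 1/2 - α₂ := by linarith
  have hU k (hk : k ≥ 1) := norm_sq_le_of_almost_minimizer hp₁ hgrowth (hu k hk)
  have hV k (hk : k ≥ 1) := norm_sq_le_of_almost_maximizer hp₂ hgrowth (hv k hk)
  refine ⟨⟨_, _, hU, hV⟩, ?_⟩
  obtain ⟨B, hB⟩ := exists_bound_of_alternating_le (div_nonneg hα₂ hp₁.le)
    (div_nonneg hα₁ hp₂.le) (growth_ratio_mul_lt_one hp₁ hp₂ hsum) hU hV
  refine ⟨√B, fun k hk => ⟨?_, ?_⟩⟩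
  · simpa using Real.abs_le_sqrt (hB k hk).1
  · simpa using Real.abs_le_sqrt (hB k hk).2

/-- boundedness of the approximation sequences from Step 3. -/
theorem stmt_7 {H : Type*} [NormedAddCommGroup H] [InnerProductSpace ℝ H]
    (N : H → H → ℝ) (α₁ α₂ C : ℝ)
    (hα₁ : 0 ≤ α₁) (hα₂ : 0 ≤ α₂) (hα₁' : α₁ < 1/2) (hα₂' : α₂ < 1/2)
    (hsum : α₁ + α₂ < 1/2) (hC : 0 < C)
    (hgrowth : ∀ u v : H, -α₂ * ‖v‖^2 - C ≤ N u v ∧ N u v ≤ α₁ * ‖u‖^2 + C)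
    (u v : ℕ → H)
    (hu : ∀ k ≥ 1, (1/2) * ‖u k‖^2 - N (u k) (v (k - 1)) ≤
      ((1/2) * ‖(0:H)‖^2 - N 0 (v (k - 1))) + 1)
    (hv : ∀ k ≥ 1, (-(1/2) * ‖(0:H)‖^2 - N (u k) 0) - 1 ≤
      -(1/2) * ‖v k‖^2 - N (u k) (v k)) :
    (∃ C₁ C₂ : ℝ,
      (∀ k ≥ 1, ‖u k‖^2 ≤ (α₂ / (1/2 - α₁)) * ‖v (k - 1)‖^2 + C₁) ∧
      (∀ k ≥ 1, ‖v k‖^2 ≤ (α₁ / (1/2 - α₂)) * ‖u k‖^2 + C₂)) ∧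
    (∃ B : ℝ, ∀ k ≥ 1, ‖u k‖ ≤ B ∧ ‖v k‖ ≤ B) :=
  stmt_7_general N α₁ α₂ C hα₁ hα₂ hsum hgrowth u v hu hv
end

section
/- Under the hypotheses of the main theorem ((h1)–(h3)), the partial critical point (u*, v*) obtained is a Nash-type equilibrium: E₁(u*, v*) = inf over u ∈ H of E₁(u, v*), and E₂(u*, v*) = sup over v ∈ H of E₂(u*, v), where E₁(u,v) = ½‖u‖² − N(u,v) and E₂(u,v) = −½‖v‖² − N(u,v). -/
open Filter RealInnerProductSpace

section Aux

open Topology InnerProductSpace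

variable {H : Type*} [NormedAddCommGroup H] [InnerProductSpace ℝ H] [CompleteSpace H]

private lemma hasGradientAt_half_norm_sq' (x : H) :
    HasGradientAt (fun u : H => (1/2 : ℝ) * ‖u‖^2) x x := by
  have h := ((hasFDerivAt_id x).inner ℝ (hasFDerivAt_id x)).const_mul (1/2 : ℝ)
  simp only [id] at h
  have h2 : (fun u : H => (1/2 : ℝ) * ⟪u, u⟫) = (fun u : H => (1/2 : ℝ) * ‖u‖^2) := by
    funext u; rw [real_inner_self_eq_norm_sq]
  rw [h2] at h
  have h3 : ((1/2 : ℝ) • ((fderivInnerCLM ℝ (x, x)).comp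
      ((ContinuousLinearMap.id ℝ H).prod (ContinuousLinearMap.id ℝ H)))) = toDual ℝ H x := by
    ext y
    simp [fderivInnerCLM_apply, real_inner_comm]
    ring
  rw [h3] at h
  simpa using h.hasGradientAt

private lemma line_hasDerivAt' (φ : H → ℝ) (G : H → H) (hG : ∀ x, HasGradientAt φ (G x) x)
    (x d : H) (t : ℝ) :
    HasDerivAt (fun s : ℝ => φ (x + s • d)) ⟪G (x + t • d), d⟫ t := by
  have hline : HasDerivAt (fun s : ℝ => x + s • d) d t := by
    simpa using ((hasDerivAt_id t).smul_const d).const_add x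
  have := (hG (x + t • d)).hasFDerivAt.comp_hasDerivAt t hline
  exact this

private lemma strong_lower' (φ : H → ℝ) (G : H → H) (hG : ∀ x, HasGradientAt φ (G x) x)
    (c : ℝ)
    (hmono : ∀ a b : H, c * ‖a - b‖^2 ≤ ⟪G a - G b, a - b⟫) (x y : H) :
    φ x + ⟪G x, y - x⟫ + c/2 * ‖y - x‖^2 ≤ φ y := by
  set d := y - x with hd
  set F : ℝ → ℝ := fun t => φ (x + t • d) - t * ⟪G x, d⟫ - t^2 * (c/2 * ‖d‖^2) with hF
  have hF' : ∀ t : ℝ, HasDerivAt F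
      (⟪G (x + t • d), d⟫ - ⟪G x, d⟫ - 2*t * (c/2 * ‖d‖^2)) t := by
    intro t
    have h1 := line_hasDerivAt' φ G hG x d t
    have h2 : HasDerivAt (fun t : ℝ => t * ⟪G x, d⟫) ⟪G x, d⟫ t := by
      simpa using (hasDerivAt_id t).mul_const ⟪G x, d⟫
    have h3 : HasDerivAt (fun t : ℝ => t^2 * (c/2 * ‖d‖^2)) (2*t * (c/2 * ‖d‖^2)) t := by
      simpa using (hasDerivAt_pow 2 t).mul_const (c/2 * ‖d‖^2)
    exact (h1.sub h2).sub h3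
  have hderiv_nonneg : ∀ t ∈ Set.Ioo (0:ℝ) 1, 0 ≤ deriv F t := by
    intro t ht
    rw [(hF' t).deriv]
    have hm := hmono (x + t • d) x
    have he : x + t • d - x = t • d := by abel
    rw [he] at hm
    rw [inner_sub_left, real_inner_smul_right, real_inner_smul_right] at hm
    have hn : ‖t • d‖^2 = t^2 * ‖d‖^2 := by
      rw [norm_smul, Real.norm_eq_abs, mul_pow, sq_abs]
    rw [hn] at hm
    have ht0 : 0 < t := ht.1
    nlinarith [hm]
  have h01 : F 0 ≤ F 1 := by
    have hmon : MonotoneOn F (Set.Icc (0:ℝ) 1) := by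
      apply monotoneOn_of_deriv_nonneg (convex_Icc 0 1)
      · exact fun t _ => ((hF' t).continuousAt).continuousWithinAt
      · exact fun t _ => ((hF' t).differentiableAt).differentiableWithinAt
      · intro t ht
        rw [interior_Icc] at ht
        exact hderiv_nonneg t ht
    exact hmon (Set.mem_Icc.2 ⟨le_refl 0, zero_le_one⟩) (Set.mem_Icc.2 ⟨zero_le_one, le_refl 1⟩)
      zero_le_one
  have hF0 : F 0 = φ x := by simp [hF]
  have hF1 : F 1 = φ y - ⟪G x, d⟫ - c/2 * ‖d‖^2 := by
    have : x + d = y := by rw [hd]; abel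
    simp [hF, this]
  rw [hF0, hF1] at h01
  linarith

private lemma exists_gradient_zero' (φ : H → ℝ) (G : H → H)
    (hG : ∀ x, HasGradientAt φ (G x) x)
    (c : ℝ) (hc : 0 < c)
    (hmono : ∀ a b : H, c * ‖a - b‖^2 ≤ ⟪G a - G b, a - b⟫)
    (b : ℝ) (hb : ∀ u, b ≤ φ u) : ∃ x, G x = 0 := by
  haveI : Nonempty H := ⟨0⟩
  have hbdd : BddBelow (Set.range φ) := ⟨b, by rintro _ ⟨u, rfl⟩; exact hb u⟩
  set m := ⨅ u : H, φ u with hm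
  have hm_le : ∀ u, m ≤ φ u := fun u => ciInf_le hbdd u
  have hex : ∀ n : ℕ, ∃ x : H, φ x < m + 1/(n+1) := by
    intro n
    apply exists_lt_of_ciInf_lt
    have : (0:ℝ) < 1/(n+1) := by positivity
    linarith
  choose xs hxs using hex
  have key : ∀ p q : ℕ, c/4 * ‖xs p - xs q‖^2 ≤ 1/(p+1) + 1/(q+1) := by
    intro p q
    set mid := xs p + (1/2 : ℝ) • (xs q - xs p) with hmid
    have e1 : xs p - mid = -((1/2 : ℝ) • (xs q - xs p)) := by rw [hmid]; abel
    have e2 : xs q - mid = (1/2 : ℝ) • (xs q - xs p) := by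
      rw [hmid]; module
    have h1 := strong_lower' φ G hG c hmono mid (xs p)
    have h2 := strong_lower' φ G hG c hmono mid (xs q)
    rw [e1] at h1
    rw [e2] at h2
    have hn1 : ‖-((1/2 : ℝ) • (xs q - xs p))‖^2 = (1/4) * ‖xs q - xs p‖^2 := by
      rw [norm_neg, norm_smul, Real.norm_eq_abs, mul_pow, sq_abs]; norm_num
    have hn2 : ‖(1/2 : ℝ) • (xs q - xs p)‖^2 = (1/4) * ‖xs q - xs p‖^2 := by
      rw [norm_smul, Real.norm_eq_abs, mul_pow, sq_abs]; norm_num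
    rw [hn1, inner_neg_right] at h1
    rw [hn2] at h2
    have hmm : m ≤ φ mid := hm_le mid
    have hp := hxs p
    have hq := hxs q
    have hrev : ‖xs p - xs q‖ = ‖xs q - xs p‖ := norm_sub_rev _ _
    rw [hrev]
    linarith
  have hcauchy : CauchySeq xs := by
    rw [Metric.cauchySeq_iff]
    intro ε hε
    obtain ⟨Nn, hNn⟩ := exists_nat_gt (8/(c * ε^2))
    refine ⟨Nn, fun p hp q hq => ?_⟩
    have hceps : 0 < c * ε^2 := by positivity
    have h8 : 8 < (Nn : ℝ) * (c * ε^2) := by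
      rw [div_lt_iff₀ hceps] at hNn; linarith
    have hle1 : 1/((p:ℝ)+1) ≤ 1/((Nn:ℝ)+1) := by
      apply one_div_le_one_div_of_le (by positivity)
      have : (Nn:ℝ) ≤ p := Nat.cast_le.2 hp
      linarith
    have hle2 : 1/((q:ℝ)+1) ≤ 1/((Nn:ℝ)+1) := by
      apply one_div_le_one_div_of_le (by positivity)
      have : (Nn:ℝ) ≤ q := Nat.cast_le.2 hq
      linarith
    have hk := key p q
    have hNpos : (0:ℝ) < (Nn:ℝ) + 1 := by positivity
    have hsq : ‖xs p - xs q‖^2 < ε^2 := by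
      have h2N : 1/((Nn:ℝ)+1) < c * ε^2 / 8 := by
        rw [div_lt_div_iff₀ hNpos (by norm_num)]
        nlinarith
      have hd2 : c/4 * ‖xs p - xs q‖^2 < c/4 * ε^2 := by linarith
      exact (mul_lt_mul_iff_right₀ (by positivity : (0:ℝ) < c/4)).1 hd2
    have := lt_of_pow_lt_pow_left₀ 2 (le_of_lt hε) hsq
    rwa [dist_eq_norm]
  obtain ⟨xstar, hlim⟩ := cauchySeq_tendsto_of_complete hcauchy
  have hcont : Continuous φ := continuous_iff_continuousAt.2
    fun x => (hG x).hasFDerivAt.continuousAt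
  have hφlim : Tendsto (fun n => φ (xs n)) atTop (𝓝 (φ xstar)) :=
    (hcont.tendsto xstar).comp hlim
  have hto : Tendsto (fun n : ℕ => m + 1/((n:ℝ)+1)) atTop (𝓝 m) := by
    have : Tendsto (fun n : ℕ => 1 / ((n : ℝ) + 1)) atTop (𝓝 0) :=
      tendsto_one_div_add_atTop_nhds_zero_nat
    simpa using tendsto_const_nhds.add this
  have hφm : φ xstar ≤ m :=
    le_of_tendsto_of_tendsto' hφlim hto fun n => (hxs n).le
  have hmin : ∀ u, φ xstar ≤ φ u := fun u => le_trans hφm (hm_le u)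
  have hloc : IsLocalMin φ xstar := Filter.Eventually.of_forall fun u => hmin u
  have h0 := hloc.hasFDerivAt_eq_zero (hG xstar).hasFDerivAt
  exact ⟨xstar, (LinearIsometryEquiv.map_eq_zero_iff _).1 h0⟩

private lemma matrix_facts' (m₁₁ m₁₂ m₂₁ m₂₂ : ℝ)
    (h11 : 0 ≤ m₁₁) (h12 : 0 ≤ m₁₂) (h21 : 0 ≤ m₂₁) (h22 : 0 ≤ m₂₂)
    (h3 : Tendsto (fun k : ℕ => (Matrix.of ![![m₁₁, m₁₂], ![m₂₁, m₂₂]]) ^ k) atTop (nhds 0)) :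
    m₁₁ < 1 ∧ m₂₂ < 1 ∧ m₁₂ * m₂₁ < (1 - m₁₁) * (1 - m₂₂) := by
  set M : Matrix (Fin 2) (Fin 2) ℝ := Matrix.of ![![m₁₁, m₁₂], ![m₂₁, m₂₂]] with hM
  have hMe : M 0 0 = m₁₁ ∧ M 0 1 = m₁₂ ∧ M 1 0 = m₂₁ ∧ M 1 1 = m₂₂ := by
    refine ⟨?_, ?_, ?_, ?_⟩ <;> simp [hM]
  have hE : ∀ i j : Fin 2, Tendsto (fun k => (M ^ k) i j) atTop (𝓝 0) := by
    intro i j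
    have hcont : Continuous (fun A : Matrix (Fin 2) (Fin 2) ℝ => A i j) :=
      (continuous_apply j).comp (continuous_apply i)
    have := (hcont.tendsto 0).comp h3
    exact this
  have hMnn : ∀ i j : Fin 2, 0 ≤ M i j := by
    intro i j; fin_cases i <;> fin_cases j <;> simp [hM] <;> assumption
  have hnn : ∀ (k : ℕ) (i j : Fin 2), 0 ≤ (M ^ k) i j := by
    intro k
    induction k with
    | zero => intro i j; fin_cases i <;> fin_cases j <;> simp [Matrix.one_apply]
    | succ k ih =>
      intro i j
      rw [pow_succ, Matrix.mul_apply, Fin.sum_univ_two]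
      exact add_nonneg (mul_nonneg (ih i 0) (hMnn 0 j)) (mul_nonneg (ih i 1) (hMnn 1 j))
  have hpow00 : ∀ k : ℕ, m₁₁ ^ k ≤ (M ^ k) 0 0 := by
    intro k
    induction k with
    | zero => simp [Matrix.one_apply]
    | succ k ih =>
      rw [pow_succ, pow_succ, Matrix.mul_apply, Fin.sum_univ_two, hMe.1, hMe.2.2.1]
      nlinarith [hnn k 0 1, mul_le_mul_of_nonneg_right ih h11]
  have hpow11 : ∀ k : ℕ, m₂₂ ^ k ≤ (M ^ k) 1 1 := by
    intro k
    induction k with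
    | zero => simp [Matrix.one_apply]
    | succ k ih =>
      rw [pow_succ, pow_succ, Matrix.mul_apply, Fin.sum_univ_two, hMe.2.1, hMe.2.2.2]
      nlinarith [hnn k 1 0, mul_le_mul_of_nonneg_right ih h22]
  have hm11 : m₁₁ < 1 := by
    by_contra h
    push_neg at h
    have : (1:ℝ) ≤ 0 := le_of_tendsto_of_tendsto' tendsto_const_nhds (hE 0 0)
      (fun k => (one_le_pow₀ h).trans (hpow00 k))
    linarith
  have hm22 : m₂₂ < 1 := by
    by_contra h
    push_neg at h
    have : (1:ℝ) ≤ 0 := le_of_tendsto_of_tendsto' tendsto_const_nhds (hE 1 1)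
      (fun k => (one_le_pow₀ h).trans (hpow11 k))
    linarith
  refine ⟨hm11, hm22, ?_⟩
  by_contra hdet
  push_neg at hdet
  have h12pos : 0 < m₁₂ := by nlinarith
  have h21pos : 0 < m₂₁ := by nlinarith
  set s := Real.sqrt ((m₁₁ - m₂₂)^2 + 4*m₁₂*m₂₁) with hsdef
  have hs2 : s^2 = (m₁₁ - m₂₂)^2 + 4*m₁₂*m₂₁ := Real.sq_sqrt (by positivity)
  have hs0 : 0 ≤ s := Real.sqrt_nonneg _
  obtain ⟨lam, hlam⟩ : ∃ l : ℝ, l = (m₁₁ + m₂₂ + s)/2 := ⟨_, rfl⟩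
  have hlam1 : 1 ≤ lam := by
    have hge : 2 - m₁₁ - m₂₂ ≤ s := by
      nlinarith [sq_nonneg (s - (2 - m₁₁ - m₂₂))]
    rw [hlam]; linarith
  have heig : lam^2 = (m₁₁ + m₂₂) * lam - (m₁₁*m₂₂ - m₁₂*m₂₁) := by
    rw [hlam]; linear_combination hs2 / 4
  have hv1 : 0 ≤ lam - m₁₁ := by
    have : m₁₁ - m₂₂ ≤ s := by
      nlinarith [sq_nonneg (s - (m₁₁ - m₂₂)), sq_nonneg (s + (m₁₁ - m₂₂)), mul_pos h12pos h21pos]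
    rw [hlam]; linarith
  have hrow2 : m₂₁ * m₁₂ + m₂₂ * (lam - m₁₁) = lam * (lam - m₁₁) := by
    linear_combination -heig
  have hiter : ∀ k : ℕ,
      (M ^ k) 0 0 * m₁₂ + (M ^ k) 0 1 * (lam - m₁₁) = lam ^ k * m₁₂ ∧
      (M ^ k) 1 0 * m₁₂ + (M ^ k) 1 1 * (lam - m₁₁) = lam ^ k * (lam - m₁₁) := by
    intro k
    induction k with
    | zero => simp [Matrix.one_apply]
    | succ k ih =>
      obtain ⟨ih1, ih2⟩ := ih
      constructor
      · rw [pow_succ, pow_succ, Matrix.mul_apply, Matrix.mul_apply, Fin.sum_univ_two,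
          Fin.sum_univ_two, hMe.1, hMe.2.1, hMe.2.2.1, hMe.2.2.2]
        linear_combination lam * ih1 + (M ^ k) 0 1 * hrow2
      · rw [pow_succ, pow_succ, Matrix.mul_apply, Matrix.mul_apply, Fin.sum_univ_two,
          Fin.sum_univ_two, hMe.1, hMe.2.1, hMe.2.2.1, hMe.2.2.2]
        linear_combination lam * ih2 + (M ^ k) 1 1 * hrow2
  have hconv : Tendsto (fun k => (M ^ k) 0 0 * m₁₂ + (M ^ k) 0 1 * (lam - m₁₁))
      atTop (𝓝 0) := by
    have := ((hE 0 0).mul_const m₁₂).add ((hE 0 1).mul_const (lam - m₁₁))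
    simpa using this
  have : m₁₂ ≤ 0 := by
    apply le_of_tendsto_of_tendsto' tendsto_const_nhds hconv
    intro k
    rw [(hiter k).1]
    nlinarith [one_le_pow₀ hlam1 (n := k)]
  linarith

end Aux

/-- the partial critical point obtained in the main theorem is a
Nash-type equilibrium for (E₁, -E₂). -/
theorem stmt_9 {H : Type*} [NormedAddCommGroup H] [InnerProductSpace ℝ H] [CompleteSpace H]
    (N : H → H → ℝ) (Nu Nv : H → H → H)
    (hNu : ∀ u v : H, HasGradientAt (fun x => N x v) (Nu u v) u)
    (hNv : ∀ u v : H, HasGradientAt (fun y => N u y) (Nv u v) v)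
    (hNu_cont : Continuous fun p : H × H => Nu p.1 p.2)
    (hNv_cont : Continuous fun p : H × H => Nv p.1 p.2)
    (α₁ α₂ C : ℝ) (hα₁ : 0 ≤ α₁) (hα₂ : 0 ≤ α₂) (hα₁' : α₁ < 1/2) (hα₂' : α₂ < 1/2)
    (hsum : α₁ + α₂ < 1/2) (hC : 0 < C)
    (h1 : ∀ u v : H, -α₂ * ‖v‖^2 - C ≤ N u v ∧ N u v ≤ α₁ * ‖u‖^2 + C)
    (m₁₁ m₁₂ m₂₁ m₂₂ : ℝ)
    (hm : 0 ≤ m₁₁ ∧ 0 ≤ m₁₂ ∧ 0 ≤ m₂₁ ∧ 0 ≤ m₂₂)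
    (h2u : ∀ u v u' v' : H,
      ⟪Nu u v - Nu u' v', u - u'⟫ ≤ m₁₁ * ‖u - u'‖^2 + m₁₂ * ‖u - u'‖ * ‖v - v'‖)
    (h2v : ∀ u v u' v' : H,
      -m₂₂ * ‖v - v'‖^2 - m₂₁ * ‖u - u'‖ * ‖v - v'‖ ≤ ⟪Nv u v - Nv u' v', v - v'⟫)
    (h3 : Tendsto (fun k : ℕ => (Matrix.of ![![m₁₁, m₁₂], ![m₂₁, m₂₂]]) ^ k) atTop (nhds 0)) :
    ∃ ustar vstar : H, ustar = Nu ustar vstar ∧ -vstar = Nv ustar vstar ∧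
      ((1/2) * ‖ustar‖^2 - N ustar vstar = ⨅ u : H, ((1/2) * ‖u‖^2 - N u vstar)) ∧
      (-(1/2) * ‖vstar‖^2 - N ustar vstar = ⨆ v : H, (-(1/2) * ‖v‖^2 - N ustar v)) := by
  obtain ⟨h11, h12, h21, h22⟩ := hm
  obtain ⟨hm11, hm22, hdet⟩ := matrix_facts' m₁₁ m₁₂ m₂₁ m₂₂ h11 h12 h21 h22 h3
  haveI : Nonempty H := ⟨0⟩
  -- gradients of the partial energy functionals
  have hGphi : ∀ v u : H, HasGradientAt (fun x => (1/2 : ℝ) * ‖x‖^2 - N x v)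
      (u - Nu u v) u := by
    intro v u
    have ha := (hasGradientAt_half_norm_sq' u).hasFDerivAt
    have hb := (hNu u v).hasFDerivAt
    have hsub := ha.sub hb
    rw [← map_sub] at hsub
    have := hsub.hasGradientAt
    simp only [LinearIsometryEquiv.symm_apply_apply] at this
    exact this
  have hGpsi : ∀ u v : H, HasGradientAt (fun y => (1/2 : ℝ) * ‖y‖^2 + N u y)
      (v + Nv u v) v := by
    intro u v
    have ha := (hasGradientAt_half_norm_sq' v).hasFDerivAt
    have hb := (hNv u v).hasFDerivAt
    have hadd := ha.add hb
    rw [← map_add] at hadd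
    have := hadd.hasGradientAt
    simp only [LinearIsometryEquiv.symm_apply_apply] at this
    exact this
  -- strong monotonicity of the partial gradients
  have hmonoU : ∀ v a b : H,
      (1 - m₁₁) * ‖a - b‖^2 ≤ ⟪(a - Nu a v) - (b - Nu b v), a - b⟫ := by
    intro v a b
    have h := h2u a v b v
    simp only [sub_self, norm_zero, mul_zero, add_zero] at h
    have hinner : ⟪(a - Nu a v) - (b - Nu b v), a - b⟫
        = ⟪a - b, a - b⟫ - ⟪Nu a v - Nu b v, a - b⟫ := by
      simp only [inner_sub_left]; ring
    rw [hinner, real_inner_self_eq_norm_sq]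
    linarith
  have hmonoV : ∀ u a b : H,
      (1 - m₂₂) * ‖a - b‖^2 ≤ ⟪(a + Nv u a) - (b + Nv u b), a - b⟫ := by
    intro u a b
    have h := h2v u a u b
    simp only [sub_self, norm_zero, mul_zero, zero_mul, sub_zero] at h
    have hinner : ⟪(a + Nv u a) - (b + Nv u b), a - b⟫
        = ⟪a - b, a - b⟫ + ⟪Nv u a - Nv u b, a - b⟫ := by
      simp only [inner_sub_left, inner_add_left]; ring
    rw [hinner, real_inner_self_eq_norm_sq]
    linarith
  -- lower bounds
  have hbphi : ∀ v u : H, -C ≤ (1/2 : ℝ) * ‖u‖^2 - N u v := by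
    intro v u
    have := (h1 u v).2
    nlinarith [sq_nonneg ‖u‖]
  have hbpsi : ∀ u v : H, -C ≤ (1/2 : ℝ) * ‖v‖^2 + N u v := by
    intro u v
    have := (h1 u v).1
    nlinarith [sq_nonneg ‖v‖]
  -- the partial minimizer maps
  have hUex : ∀ v : H, ∃ u, u - Nu u v = 0 := fun v =>
    exists_gradient_zero' _ _ (hGphi v) (1 - m₁₁) (by linarith) (hmonoU v) (-C) (hbphi v)
  choose U hU using hUex
  have hUfix : ∀ v, U v = Nu (U v) v := fun v => sub_eq_zero.1 (hU v)
  have hVex : ∀ u : H, ∃ v, v + Nv u v = 0 := fun u =>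
    exists_gradient_zero' _ _ (hGpsi u) (1 - m₂₂) (by linarith) (hmonoV u) (-C) (hbpsi u)
  choose V hV using hVex
  have hVfix : ∀ u, Nv u (V u) = -(V u) := fun u => eq_neg_of_add_eq_zero_right (hV u)
  -- Lipschitz estimates
  have hUlip : ∀ v v' : H, ‖U v - U v'‖ ≤ m₁₂/(1 - m₁₁) * ‖v - v'‖ := by
    intro v v'
    have h := h2u (U v) v (U v') v'
    have heq : ⟪Nu (U v) v - Nu (U v') v', U v - U v'⟫ = ‖U v - U v'‖^2 := by
      conv_lhs => rw [← hUfix v, ← hUfix v']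
      exact real_inner_self_eq_norm_sq _
    rw [heq] at h
    rcases eq_or_lt_of_le (norm_nonneg (U v - U v')) with h0 | h0
    · rw [← h0]; exact mul_nonneg (div_nonneg h12 (by linarith)) (norm_nonneg _)
    · rw [div_mul_eq_mul_div, le_div_iff₀ (by linarith)]
      nlinarith
  have hVlip : ∀ u u' : H, ‖V u - V u'‖ ≤ m₂₁/(1 - m₂₂) * ‖u - u'‖ := by
    intro u u'
    have h := h2v u (V u) u' (V u')
    rw [hVfix u, hVfix u'] at h
    have heq : -(V u) - -(V u') = -(V u - V u') := by abel
    rw [heq, inner_neg_left, real_inner_self_eq_norm_sq] at h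
    rcases eq_or_lt_of_le (norm_nonneg (V u - V u')) with h0 | h0
    · rw [← h0]; exact mul_nonneg (div_nonneg h21 (by linarith)) (norm_nonneg _)
    · rw [div_mul_eq_mul_div, le_div_iff₀ (by linarith)]
      nlinarith
  -- contraction
  set T : H → H := fun v => V (U v) with hT
  set κ : ℝ := m₂₁/(1 - m₂₂) * (m₁₂/(1 - m₁₁)) with hκ
  have hκ0 : 0 ≤ κ := by
    apply mul_nonneg <;> apply div_nonneg <;> linarith
  have hκ1 : κ < 1 := by
    rw [hκ, div_mul_div_comm, div_lt_one (by nlinarith)]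
    nlinarith
  have hTlip : ∀ v v' : H, ‖T v - T v'‖ ≤ κ * ‖v - v'‖ := by
    intro v v'
    calc ‖T v - T v'‖ ≤ m₂₁/(1 - m₂₂) * ‖U v - U v'‖ := hVlip (U v) (U v')
    _ ≤ m₂₁/(1 - m₂₂) * (m₁₂/(1 - m₁₁) * ‖v - v'‖) := by
        apply mul_le_mul_of_nonneg_left (hUlip v v')
        apply div_nonneg <;> linarith
    _ = κ * ‖v - v'‖ := by rw [hκ, mul_assoc]
  have hcontr : ContractingWith ⟨κ, hκ0⟩ T := by
    constructor
    · exact_mod_cast hκ1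
    · apply LipschitzWith.of_dist_le_mul
      intro x y
      rw [dist_eq_norm, dist_eq_norm]
      exact hTlip x y
  obtain ⟨vstar, hfix, -⟩ := hcontr.exists_fixedPoint 0 (by simp [edist_ne_top])
  -- hfix : T vstar = vstar
  have hfix' : V (U vstar) = vstar := hfix
  refine ⟨U vstar, vstar, hUfix vstar, ?_, ?_, ?_⟩
  · -- -vstar = Nv ustar vstar
    have := hVfix (U vstar)
    rw [hfix'] at this
    exact this.symm
  · -- infimum characterization
    have hG0 : U vstar - Nu (U vstar) vstar = 0 := hU vstar
    have hmin : ∀ y : H, (1/2 : ℝ) * ‖U vstar‖^2 - N (U vstar) vstar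
        ≤ (1/2 : ℝ) * ‖y‖^2 - N y vstar := by
      intro y
      have h := strong_lower' (fun x => (1/2 : ℝ) * ‖x‖^2 - N x vstar)
        (fun u => u - Nu u vstar) (hGphi vstar) (1 - m₁₁) (hmonoU vstar) (U vstar) y
      simp only [hG0, inner_zero_left] at h
      have hnn : 0 ≤ (1 - m₁₁)/2 * ‖y - U vstar‖^2 := by
        apply mul_nonneg (by linarith) (sq_nonneg _)
      linarith
    apply le_antisymm
    · exact le_ciInf hmin
    · exact ciInf_le ⟨(1/2 : ℝ) * ‖U vstar‖^2 - N (U vstar) vstar,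
        by rintro _ ⟨u, rfl⟩; exact hmin u⟩ (U vstar)
  · -- supremum characterization
    have hG0 : vstar + Nv (U vstar) vstar = 0 := by
      have := hVfix (U vstar)
      rw [hfix'] at this
      rw [this]; abel
    have hmin : ∀ y : H, (1/2 : ℝ) * ‖vstar‖^2 + N (U vstar) vstar
        ≤ (1/2 : ℝ) * ‖y‖^2 + N (U vstar) y := by
      intro y
      have h := strong_lower' (fun w => (1/2 : ℝ) * ‖w‖^2 + N (U vstar) w)
        (fun w => w + Nv (U vstar) w) (hGpsi (U vstar)) (1 - m₂₂) (hmonoV (U vstar)) vstar y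
      simp only [hG0, inner_zero_left] at h
      have hnn : 0 ≤ (1 - m₂₂)/2 * ‖y - vstar‖^2 := by
        apply mul_nonneg (by linarith) (sq_nonneg _)
      linarith
    apply le_antisymm
    · refine le_ciSup_of_le ⟨-(1/2 : ℝ) * ‖vstar‖^2 - N (U vstar) vstar, ?_⟩ vstar le_rfl
      rintro _ ⟨v, rfl⟩
      have := hmin v
      linarith
    · apply ciSup_le
      intro v
      have := hmin v
      linarith
end

section
/- Palais–Smale boundedness: Let H be a Hilbert space, N : H × H → ℝ a C¹ functional satisfying the monotonicity conditions (h2) with matrix M convergent to zero (as in the main theorem, with all relevant coefficients m₁₁ < ½). Let (e_k) = ((e₁)_k, (e₂)_k) be a sequence with (e₁)_k − N_u(e_k) → 0 and −(e₂)_k − N_v(e_k) → 0 in H. Then the sequence (e_k) is bounded in H × H. -/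
open Filter RealInnerProductSpace

/-!
Test the residuals against `u` and `-v`, and compare `Nu`, `Nv` with their values at `(0, 0)`
via the monotonicity conditions. With `a = ‖u‖`, `b = ‖v‖` and `C` the size of the residuals
plus `‖Nu 0 0‖ + ‖Nv 0 0‖`, this gives `a² + b² ≤ C (a + b) + m (a + b)²`; since
`(a + b)² ≤ 2 (a² + b²)`, the condition `2m < 1` turns it into `a + b ≤ 2C / (1 - 2m)`.
-/

lemma norm_sq_le_add_inner_sub {H : Type*} [NormedAddCommGroup H] [InnerProductSpace ℝ H]
    (u w w₀ : H) : ‖u‖ ^ 2 ≤ (‖u - w‖ + ‖w₀‖) * ‖u‖ + ⟪w - w₀, u⟫ := by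
  have hsplit : ‖u‖ ^ 2 = ⟪u - w, u⟫ + ⟪w - w₀, u⟫ + ⟪w₀, u⟫ := by
    rw [← inner_add_left, ← inner_add_left, sub_add_sub_cancel, sub_add_cancel,
      real_inner_self_eq_norm_sq]
  linarith [real_inner_le_norm (u - w) u, real_inner_le_norm w₀ u]

lemma one_sub_two_mul_add_le_of_sq_add_sq_le {a b K m : ℝ} (ha : 0 ≤ a) (hb : 0 ≤ b)
    (hK : 0 ≤ K) (h : a ^ 2 + b ^ 2 ≤ K * (a + b) + m * (a + b) ^ 2) :
    (1 - 2 * m) * (a + b) ≤ 2 * K := by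
  rcases (add_nonneg ha hb).eq_or_lt with hs | hs
  · rw [← hs]
    linarith
  · have hsq : (1 - 2 * m) * (a + b) * (a + b) ≤ 2 * K * (a + b) := by
      nlinarith [sq_nonneg (a - b)]
    exact le_of_mul_le_mul_right hsq hs

lemma one_sub_two_mul_norm_add_norm_le {H : Type*} [NormedAddCommGroup H]
    [InnerProductSpace ℝ H] {Nu Nv : H → H → H} {m : ℝ}
    (h2u : ∀ u v u' v' : H,
      ⟪Nu u v - Nu u' v', u - u'⟫ ≤ m * ‖u - u'‖ ^ 2 + m * ‖u - u'‖ * ‖v - v'‖)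
    (h2v : ∀ u v u' v' : H,
      -m * ‖v - v'‖ ^ 2 - m * ‖u - u'‖ * ‖v - v'‖ ≤ ⟪Nv u v - Nv u' v', v - v'⟫)
    (u v : H) :
    (1 - 2 * m) * (‖u‖ + ‖v‖) ≤
      2 * (‖u - Nu u v‖ + ‖-v - Nv u v‖ + ‖Nu 0 0‖ + ‖Nv 0 0‖) := by
  have hu := norm_sq_le_add_inner_sub u (Nu u v) (Nu 0 0)
  have hv := norm_sq_le_add_inner_sub (-v) (Nv u v) (Nv 0 0)
  rw [norm_neg, inner_neg_right] at hv
  have hmu := h2u u v 0 0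
  have hmv := h2v u v 0 0
  simp only [sub_zero] at hmu hmv
  apply one_sub_two_mul_add_le_of_sq_add_sq_le (norm_nonneg u) (norm_nonneg v) (by positivity)
  nlinarith [norm_nonneg u, norm_nonneg v, norm_nonneg (u - Nu u v), norm_nonneg (-v - Nv u v),
    norm_nonneg (Nu 0 0), norm_nonneg (Nv 0 0)]

theorem stmt_12_general {H : Type*} [NormedAddCommGroup H] [InnerProductSpace ℝ H]
    (Nu Nv : H → H → H)
    (m : ℝ) (hconv : 2 * m < 1)
    (h2u : ∀ u v u' v' : H,
      ⟪Nu u v - Nu u' v', u - u'⟫ ≤ m * ‖u - u'‖^2 + m * ‖u - u'‖ * ‖v - v'‖)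
    (h2v : ∀ u v u' v' : H,
      -m * ‖v - v'‖^2 - m * ‖u - u'‖ * ‖v - v'‖ ≤ ⟪Nv u v - Nv u' v', v - v'⟫)
    (e₁ e₂ : ℕ → H)
    (h₁ : Tendsto (fun k => e₁ k - Nu (e₁ k) (e₂ k)) atTop (nhds 0))
    (h₂ : Tendsto (fun k => -(e₂ k) - Nv (e₁ k) (e₂ k)) atTop (nhds 0)) :
    ∃ B : ℝ, ∀ k, ‖e₁ k‖ ≤ B ∧ ‖e₂ k‖ ≤ B := by
  obtain ⟨F₁, hF₁⟩ := h₁.norm.bddAbove_range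
  obtain ⟨F₂, hF₂⟩ := h₂.norm.bddAbove_range
  have hpos : 0 < 1 - 2 * m := by linarith
  refine ⟨2 * (F₁ + F₂ + ‖Nu 0 0‖ + ‖Nv 0 0‖) / (1 - 2 * m), fun k => ?_⟩
  have hsum : ‖e₁ k‖ + ‖e₂ k‖ ≤ 2 * (F₁ + F₂ + ‖Nu 0 0‖ + ‖Nv 0 0‖) / (1 - 2 * m) := by
    rw [le_div_iff₀ hpos, mul_comm]
    refine (one_sub_two_mul_norm_add_norm_le h2u h2v (e₁ k) (e₂ k)).trans ?_
    linarith [hF₁ ⟨k, rfl⟩, hF₂ ⟨k, rfl⟩]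
  constructor <;> linarith [norm_nonneg (e₁ k), norm_nonneg (e₂ k)]

/-- boundedness of Palais–Smale-type sequences under the
monotonicity conditions with coefficient m₁₁ (matrix of all entries m₁₁
convergent to zero, i.e. 2 m₁₁ < 1). -/
theorem stmt_12 {H : Type*} [NormedAddCommGroup H] [InnerProductSpace ℝ H] [CompleteSpace H]
    (N : H → H → ℝ) (Nu Nv : H → H → H)
    (hNu : ∀ u v : H, HasGradientAt (fun x => N x v) (Nu u v) u)
    (hNv : ∀ u v : H, HasGradientAt (fun y => N u y) (Nv u v) v)
    (m : ℝ) (hm : 0 ≤ m) (hconv : 2 * m < 1)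
    (h2u : ∀ u v u' v' : H,
      ⟪Nu u v - Nu u' v', u - u'⟫ ≤ m * ‖u - u'‖^2 + m * ‖u - u'‖ * ‖v - v'‖)
    (h2v : ∀ u v u' v' : H,
      -m * ‖v - v'‖^2 - m * ‖u - u'‖ * ‖v - v'‖ ≤ ⟪Nv u v - Nv u' v', v - v'⟫)
    (e₁ e₂ : ℕ → H)
    (h₁ : Tendsto (fun k => e₁ k - Nu (e₁ k) (e₂ k)) atTop (nhds 0))
    (h₂ : Tendsto (fun k => -(e₂ k) - Nv (e₁ k) (e₂ k)) atTop (nhds 0)) :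
    ∃ B : ℝ, ∀ k, ‖e₁ k‖ ≤ B ∧ ‖e₂ k‖ ≤ B :=
  stmt_12_general Nu Nv m hconv h2u h2v e₁ e₂ h₁ h₂
end
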